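/- Let V ⊂ ℝ² be the set of five vertices of a regular pentagon with side length 1. The minimum, over all partitions of V into exactly 3 nonempty clusters, of the total cost Σ_C w_C equals 1, where for a nonempty finite cluster C the cost is w_C = (1/(2|C|))·Σ_{p∈C} Σ_{q∈C} ‖p−q‖². The minimum is attained by two clusters each consisting of two adjacent vertices plus one singleton cluster. -/

import Mathlib

noncomputable instance : DecidableEq (EuclideanSpace ℝ (Fin 2)) :=
  Classical.decEq _

/-- The vertices of a regular pentagon with side length 1 in the plane. -/
noncomputable def pentagonVertex (m : Fin 5) : EuclideanSpace ℝ (Fin 2) :=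
  (1 / (2 * Real.sin (Real.pi / 5))) •
    (WithLp.equiv 2 (Fin 2 → ℝ)).symm
      ![Real.cos (2 * Real.pi * (m : ℕ) / 5), Real.sin (2 * Real.pi * (m : ℕ) / 5)]

/-- The vertex set of the (standard) regular pentagon with side length 1. -/
noncomputable def pentagonSet : Finset (EuclideanSpace ℝ (Fin 2)) :=
  Finset.image pentagonVertex Finset.univ

/-- The cost of a cluster `C`: `(1/(2|C|))·Σ_{p∈C} Σ_{q∈C} ‖p−q‖²`, which equals the sum
of squared distances from the points of `C` to their centroid. -/
noncomputable def clusterCost (C : Finset (EuclideanSpace ℝ (Fin 2))) : ℝ :=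
  (1 / (2 * (C.card : ℝ))) * ∑ p ∈ C, ∑ q ∈ C, ‖p - q‖ ^ 2

/-- `P` is a partition of `V` into exactly `k` nonempty clusters. -/
def IsPartitionInto (V : Finset (EuclideanSpace ℝ (Fin 2))) (k : ℕ)
    (P : Finset (Finset (EuclideanSpace ℝ (Fin 2)))) : Prop :=
  (∀ C ∈ P, C.Nonempty) ∧ (P : Set (Finset (EuclideanSpace ℝ (Fin 2)))).PairwiseDisjoint id ∧
    P.sup id = V ∧ P.card = k

/-!
Distinct vertices of the pentagon are at distance at least 1 (the side is 1, a diagonal is the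
golden ratio), so in a cluster of `c` points every point contributes at least `c - 1` to the
double sum and the cluster costs at least `(c - 1) / 2`. Summed over a partition of the five
vertices into three clusters this gives `(5 - 3) / 2 = 1`, and two pairs of adjacent vertices
(cost `1 / 2` each) together with a singleton (cost `0`) attain it.
-/

open Finset Real

namespace Real

lemma cos_two_pi_mul_div_le_of_le {n m : ℕ} (hm : 1 ≤ m) (hmn : 2 * m ≤ n) :
    cos (2 * π * m / n) ≤ cos (2 * π / n) := by
  have hn : (0 : ℝ) < n := by norm_cast; omega
  apply cos_le_cos_of_nonneg_of_le_pi (by positivity)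
  · rw [div_le_iff₀ hn]
    nlinarith [pi_pos, (show (2 * m : ℝ) ≤ n by exact_mod_cast hmn)]
  · rw [div_le_div_iff_of_pos_right hn]
    nlinarith [pi_pos, (show (1 : ℝ) ≤ m by exact_mod_cast hm)]

lemma cos_two_pi_mul_div_le {n : ℕ} {k : ℤ} (hk : ¬ (n : ℤ) ∣ k) :
    cos (2 * π * k / n) ≤ cos (2 * π / n) := by
  rcases Nat.eq_zero_or_pos n with rfl | hn
  · simp
  obtain ⟨r, hr⟩ : ∃ r : ℕ, (r : ℤ) = k % n :=
    ⟨_, Int.toNat_of_nonneg (Int.emod_nonneg k (by omega))⟩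
  have hr0 : 0 < r := by
    have : k % n ≠ 0 := fun h => hk (Int.dvd_of_emod_eq_zero h)
    omega
  have hrn : r < n := by
    have := Int.emod_lt_of_pos k (by omega : (0 : ℤ) < n)
    omega
  have hperiod : cos (2 * π * k / n) = cos (2 * π * r / n) := by
    have hk : (k : ℝ) = r + n * (k / n : ℤ) := by
      have := Int.emod_add_mul_ediv k n
      rw [← hr] at this
      exact_mod_cast this.symm
    rw [hk, ← cos_add_int_mul_two_pi (2 * π * r / n) (k / n)]
    congr 1
    field_simp
  rw [hperiod]
  rcases le_or_gt (2 * r) n with h | h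
  · exact cos_two_pi_mul_div_le_of_le hr0 h
  · calc cos (2 * π * r / n) = cos (2 * π * ↑(n - r) / n) := by
          rw [← cos_two_pi_sub, Nat.cast_sub hrn.le]
          congr 1
          field_simp
      _ ≤ cos (2 * π / n) := cos_two_pi_mul_div_le_of_le (by omega) (by omega)

lemma cos_two_pi_div_five_lt_one : cos (2 * π / 5) < 1 := by
  simpa using cos_lt_cos_of_nonneg_of_le_pi le_rfl (by linarith [pi_pos]) (by positivity)

end Real

section Clusters

variable {V C : Finset (EuclideanSpace ℝ (Fin 2))}

lemma clusterCost_singleton (p : EuclideanSpace ℝ (Fin 2)) : clusterCost {p} = 0 := by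
  simp [clusterCost]

lemma clusterCost_pair {p q : EuclideanSpace ℝ (Fin 2)} (hpq : p ≠ q) :
    clusterCost {p, q} = ‖p - q‖ ^ 2 / 2 := by
  rw [clusterCost, card_pair hpq, sum_pair hpq, sum_pair hpq, sum_pair hpq, norm_sub_rev q p]
  simp only [sub_self, norm_zero]
  ring

lemma card_sub_one_le_sum_norm_sub_sq (hC : ∀ p ∈ C, ∀ q ∈ C, p ≠ q → 1 ≤ ‖p - q‖)
    {p : EuclideanSpace ℝ (Fin 2)} (hp : p ∈ C) :
    (C.card : ℝ) - 1 ≤ ∑ q ∈ C, ‖p - q‖ ^ 2 := by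
  rw [← add_sum_erase C _ hp, sub_self, norm_zero, zero_pow two_ne_zero, zero_add]
  calc (C.card : ℝ) - 1 = ∑ _q ∈ C.erase p, (1 : ℝ) := by
        rw [sum_const, card_erase_of_mem hp, nsmul_one, Nat.cast_pred (card_pos.2 ⟨p, hp⟩)]
    _ ≤ ∑ q ∈ C.erase p, ‖p - q‖ ^ 2 := sum_le_sum fun q hq =>
        one_le_pow₀ (hC p hp q (mem_of_mem_erase hq) (ne_of_mem_erase hq).symm)

lemma card_sub_one_div_two_le_clusterCost (hC : ∀ p ∈ C, ∀ q ∈ C, p ≠ q → 1 ≤ ‖p - q‖) :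
    ((C.card : ℝ) - 1) / 2 ≤ clusterCost C := by
  rcases C.eq_empty_or_nonempty with rfl | hne
  · norm_num [clusterCost]
  have hcard : (0 : ℝ) < C.card := by exact_mod_cast hne.card_pos
  calc ((C.card : ℝ) - 1) / 2 = 1 / (2 * C.card) * ∑ _p ∈ C, ((C.card : ℝ) - 1) := by
        rw [sum_const, nsmul_eq_mul]
        field_simp
    _ ≤ clusterCost C := mul_le_mul_of_nonneg_left
        (sum_le_sum fun p hp => card_sub_one_le_sum_norm_sub_sq hC hp) (by positivity)

variable {k : ℕ} {P : Finset (Finset (EuclideanSpace ℝ (Fin 2)))}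

lemma IsPartitionInto.subset (hP : IsPartitionInto V k P) (hC : C ∈ P) : C ⊆ V :=
  hP.2.2.1 ▸ le_sup (f := id) hC

lemma IsPartitionInto.sum_card (hP : IsPartitionInto V k P) : ∑ C ∈ P, C.card = V.card := by
  rw [← hP.2.2.1, sup_eq_biUnion, card_biUnion hP.2.1]
  rfl

theorem IsPartitionInto.card_sub_div_two_le_sum_clusterCost
    (hV : ∀ p ∈ V, ∀ q ∈ V, p ≠ q → 1 ≤ ‖p - q‖) (hP : IsPartitionInto V k P) :
    ((V.card : ℝ) - k) / 2 ≤ ∑ C ∈ P, clusterCost C :=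
  calc ((V.card : ℝ) - k) / 2 = ∑ C ∈ P, ((C.card : ℝ) - 1) / 2 := by
        rw [← sum_div, sum_sub_distrib, ← Nat.cast_sum, hP.sum_card, sum_const, hP.2.2.2,
          nsmul_one]
    _ ≤ ∑ C ∈ P, clusterCost C := sum_le_sum fun C hC =>
        card_sub_one_div_two_le_clusterCost fun p hp q hq =>
          hV p (hP.subset hC hp) q (hP.subset hC hq)

end Clusters

section Pentagon

lemma norm_smul_circle_sub_smul_circle_sq (ρ a b : ℝ) :
    ‖ρ • (WithLp.equiv 2 (Fin 2 → ℝ)).symm ![cos a, sin a] -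
        ρ • (WithLp.equiv 2 (Fin 2 → ℝ)).symm ![cos b, sin b]‖ ^ 2 =
      2 * ρ ^ 2 * (1 - cos (a - b)) := by
  rw [← smul_sub, norm_smul, mul_pow, EuclideanSpace.norm_sq_eq, Fin.sum_univ_two]
  simp only [norm_eq_abs, sq_abs, WithLp.equiv_symm_apply, PiLp.sub_apply,
    Matrix.cons_val_zero, Matrix.cons_val_one, Matrix.cons_val_fin_one, cos_sub]
  nlinarith [sin_sq_add_cos_sq a, sin_sq_add_cos_sq b]

/-- The circumradius `1 / (2 sin (π / 5))` is what makes the side length `1`: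
`1 - cos (2π / 5) = 2 sin² (π / 5)`. -/
lemma norm_pentagonVertex_sub_sq (i j : Fin 5) :
    ‖pentagonVertex i - pentagonVertex j‖ ^ 2 =
      (1 - cos (2 * π * ((i : ℤ) - j : ℤ) / 5)) / (1 - cos (2 * π / 5)) := by
  have hsin : 0 < sin (π / 5) := sin_pos_of_pos_of_lt_pi (by positivity) (by linarith [pi_pos])
  have hcos : 1 - cos (2 * π / 5) = 2 * sin (π / 5) ^ 2 := by
    rw [show 2 * π / 5 = 2 * (π / 5) by ring, cos_two_mul_eq_one_sub]
    ring
  rw [pentagonVertex, pentagonVertex, norm_smul_circle_sub_smul_circle_sq, hcos]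
  field_simp
  congr 3
  push_cast
  ring

lemma one_le_norm_pentagonVertex_sub {i j : Fin 5} (hij : i ≠ j) :
    1 ≤ ‖pentagonVertex i - pentagonVertex j‖ := by
  have hle := cos_two_pi_mul_div_le (n := 5) (k := (i : ℤ) - j) (by omega)
  push_cast at hle
  rw [← one_le_sq_iff₀ (norm_nonneg _), norm_pentagonVertex_sub_sq,
    one_le_div (by linarith [cos_two_pi_div_five_lt_one])]
  push_cast
  linarith

lemma norm_pentagonVertex_sub_succ {i j : Fin 5} (hij : (j : ℤ) = i + 1) :
    ‖pentagonVertex i - pentagonVertex j‖ = 1 := by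
  rw [← pow_eq_one_iff_of_nonneg (norm_nonneg _) two_ne_zero, norm_pentagonVertex_sub_sq, hij,
    show ((i : ℤ) - (i + 1) : ℤ) = -1 by ring,
    div_eq_one_iff_eq (by linarith [cos_two_pi_div_five_lt_one])]
  push_cast
  rw [show 2 * π * -1 / 5 = -(2 * π / 5) by ring, cos_neg]

lemma pentagonVertex_injective : Function.Injective pentagonVertex := fun i j h =>
  by_contra fun hij => (one_le_norm_pentagonVertex_sub hij).not_gt (by simp [h])

lemma card_pentagonSet : pentagonSet.card = 5 := by
  rw [pentagonSet, card_image_of_injective _ pentagonVertex_injective, card_univ, Fintype.card_fin]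

lemma one_le_norm_sub_of_mem_pentagonSet {p q : EuclideanSpace ℝ (Fin 2)}
    (hp : p ∈ pentagonSet) (hq : q ∈ pentagonSet) (hpq : p ≠ q) : 1 ≤ ‖p - q‖ := by
  obtain ⟨i, -, rfl⟩ := mem_image.1 hp
  obtain ⟨j, -, rfl⟩ := mem_image.1 hq
  exact one_le_norm_pentagonVertex_sub (ne_of_apply_ne _ hpq)

lemma pentagonSet_eq : pentagonSet = {pentagonVertex 0, pentagonVertex 1, pentagonVertex 2,
    pentagonVertex 3, pentagonVertex 4} := by
  simp [pentagonSet, Fin.univ_succ, image_insert]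

noncomputable def pentagonPairing : Finset (Finset (EuclideanSpace ℝ (Fin 2))) :=
  {{pentagonVertex 0, pentagonVertex 1}, {pentagonVertex 2, pentagonVertex 3}, {pentagonVertex 4}}

lemma pentagonPairing_eq_image :
    pentagonPairing = ({{0, 1}, {2, 3}, {4}} : Finset (Finset (Fin 5))).image
      (image pentagonVertex) := by
  simp [pentagonPairing, image_insert]

lemma isPartitionInto_pentagonPairing : IsPartitionInto pentagonSet 3 pentagonPairing := by
  refine ⟨by simp [pentagonPairing], ?_, ?_, ?_⟩
  · simp [pentagonPairing, Set.pairwiseDisjoint_insert, pentagonVertex_injective.eq_iff]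
  · rw [pentagonSet_eq, pentagonPairing]
    ext
    simp only [sup_insert, id_eq, sup_singleton, sup_eq_union', insert_union, singleton_union,
      union_insert, mem_insert, mem_singleton]
    tauto
  · rw [pentagonPairing_eq_image,
      card_image_of_injective _ (image_injective pentagonVertex_injective)]
    rfl

lemma sum_clusterCost_pentagonPairing : ∑ C ∈ pentagonPairing, clusterCost C = 1 := by
  rw [pentagonPairing_eq_image, sum_image (image_injective pentagonVertex_injective).injOn,
    sum_insert (by decide), sum_insert (by decide), sum_singleton]
  simp only [image_insert, image_singleton]
  rw [clusterCost_pair (pentagonVertex_injective.ne (by decide)),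
    clusterCost_pair (pentagonVertex_injective.ne (by decide)), clusterCost_singleton,
    norm_pentagonVertex_sub_succ (by decide), norm_pentagonVertex_sub_succ (by decide)]
  norm_num

end Pentagon

open Finset in
/-- Partitioning the unit-side regular pentagon's vertices into exactly 3 nonempty
clusters has minimum total cost `1`, attained by two clusters of two adjacent vertices
each plus one singleton. -/
theorem pentagon_three_clusters :
    (IsPartitionInto pentagonSet 3
        {{pentagonVertex 0, pentagonVertex 1}, {pentagonVertex 2, pentagonVertex 3},
          {pentagonVertex 4}} ∧
      ∑ C ∈ ({{pentagonVertex 0, pentagonVertex 1}, {pentagonVertex 2, pentagonVertex 3},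
          {pentagonVertex 4}} : Finset (Finset (EuclideanSpace ℝ (Fin 2)))),
        clusterCost C = 1) ∧
      ∀ P : Finset (Finset (EuclideanSpace ℝ (Fin 2))),
        IsPartitionInto pentagonSet 3 P → 1 ≤ ∑ C ∈ P, clusterCost C := by
  refine ⟨⟨isPartitionInto_pentagonPairing, sum_clusterCost_pentagonPairing⟩, fun P hP => ?_⟩
  have hbound := hP.card_sub_div_two_le_sum_clusterCost
    fun p hp q hq => one_le_norm_sub_of_mem_pentagonSet hp hq
  norm_num [card_pentagonSet] at hbound
  exact hbound
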